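/- arXiv:1308.1511 — 3 statements merged into one kernel-verified Lean document; each statement's English description precedes it below -/
import Mathlib

section
/- Let {|k⟩} and {|x_l⟩} be two orthonormal bases of ℂ^d with overlaps c_{kl} := |⟨k|x_l⟩|², and let c := max_{k,l} c_{kl}. Let ρ_{AB} be a density matrix on ℂ^d ⊗ ℂ^d with marginal ρ_B = Tr_A(ρ_{AB}). Then the dephased-twice operator ∑_{k,l} (|x_l⟩⟨x_l| |k⟩⟨k| ⊗ I) ρ_{AB} (|k⟩⟨k| |x_l⟩⟨x_l| ⊗ I) = ∑_{k,l} c_{kl} |x_l⟩⟨x_l| ⊗ Tr_A[(|k⟩⟨k|⊗I)ρ_{AB}] satisfies the operator inequality ≤ c·(I ⊗ ρ_B). -/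
/-!
The `(k, l)` term of the dephased-twice operator is `c_{kl} |x_l⟩⟨x_l| ⊗ B_k`, where `B_k` is the
`k`-th diagonal block of `ρ_AB`. Since the projections `|x_l⟩⟨x_l|` resolve the identity and the
blocks `B_k` sum to `ρ_B`, the difference `c (I ⊗ ρ_B) - ∑ c_{kl} |x_l⟩⟨x_l| ⊗ B_k` equals
`∑ (c - c_{kl}) |x_l⟩⟨x_l| ⊗ B_k`, a nonnegative combination of Kronecker products of positive
semidefinite matrices.
-/

open Matrix Kronecker ComplexOrder

namespace Matrix

variable {R n m : Type*}

theorem sum_kronecker_sum [CommSemiring R] {ι κ : Type*} (s : Finset ι) (t : Finset κ)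
    (A : ι → Matrix n n R) (B : κ → Matrix m m R) :
    (∑ i ∈ s, A i) ⊗ₖ (∑ j ∈ t, B j) = ∑ i ∈ s, ∑ j ∈ t, A i ⊗ₖ B j := by
  ext ⟨i, a⟩ ⟨j, b⟩
  simp only [kroneckerMap_apply, sum_apply, Finset.sum_mul, Finset.mul_sum]
  exact Finset.sum_comm

theorem sum_vecMulVec_self_star_eq_one [CommRing R] [StarRing R] [Fintype n] [DecidableEq n]
    (x : n → n → R) (hx : ∀ l l', ∑ i, star (x l i) * x l' i = if l = l' then 1 else 0) :
    ∑ l, vecMulVec (x l) (star (x l)) = 1 := by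
  set U : Matrix n n R := of fun i l => x l i
  have hUU : Uᴴ * U = 1 := by
    ext l l'
    simp [U, mul_apply, hx, one_apply]
  calc ∑ l, vecMulVec (x l) (star (x l)) = U * Uᴴ := by
        ext i j
        simp [U, sum_apply, mul_apply, vecMulVec_apply]
    _ = 1 := mul_eq_one_comm.mp hUU

theorem vecMulVec_mul_single_kronecker_one_mul_mul [CommSemiring R] [StarRing R]
    [Fintype n] [Fintype m] [DecidableEq n] [DecidableEq m]
    (u : n → R) (k : n) (ρ : Matrix (n × m) (n × m) R) :
    ((vecMulVec u (star u) * single k k 1) ⊗ₖ (1 : Matrix m m R)) * ρ *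
        ((single k k 1 * vecMulVec u (star u)) ⊗ₖ (1 : Matrix m m R)) =
      (star (u k) * u k) • (vecMulVec u (star u) ⊗ₖ ρ.submatrix (Prod.mk k) (Prod.mk k)) := by
  ext ⟨i, a⟩ ⟨j, b⟩
  simp [mul_apply, kroneckerMap_apply, Fintype.sum_prod_type, vecMulVec_apply, one_apply,
    single_apply, ite_and, ite_mul, mul_ite]
  ring

end Matrix

theorem dephased_twice_le_general (d : ℕ)
    (x : Fin d → (Fin d → ℂ))
    (hx : ∀ l l', ∑ i, star (x l i) * x l' i = if l = l' then 1 else 0)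
    (ckl : Fin d → Fin d → ℝ)
    (hckl : ∀ k l, ckl k l = ‖x l k‖ ^ 2)
    (c : ℝ)
    (hc : IsGreatest (Set.range fun p : Fin d × Fin d => ckl p.1 p.2) c)
    (ρAB : Matrix (Fin d × Fin d) (Fin d × Fin d) ℂ)
    (hρAB : ρAB.PosSemidef)
    (ρB : Matrix (Fin d) (Fin d) ℂ)
    (hρB : ρB = Matrix.of fun j j' => ∑ i, ρAB (i, j) (i, j'))
    (B : Fin d → Matrix (Fin d) (Fin d) ℂ)
    (hB : ∀ k, B k = Matrix.of fun j j' => ρAB (k, j) (k, j')) :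
    (∑ k, ∑ l, ((Matrix.vecMulVec (x l) (star (x l)) *
          Matrix.single k k (1 : ℂ)) ⊗ₖ (1 : Matrix (Fin d) (Fin d) ℂ)) *
          ρAB *
          ((Matrix.single k k (1 : ℂ) *
            Matrix.vecMulVec (x l) (star (x l))) ⊗ₖ (1 : Matrix (Fin d) (Fin d) ℂ)) =
        ∑ k, ∑ l, ((ckl k l : ℝ) : ℂ) •
          (Matrix.vecMulVec (x l) (star (x l)) ⊗ₖ B k)) ∧
      ((c : ℂ) • ((1 : Matrix (Fin d) (Fin d) ℂ) ⊗ₖ ρB) -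
        ∑ k, ∑ l, ((ckl k l : ℝ) : ℂ) •
          (Matrix.vecMulVec (x l) (star (x l)) ⊗ₖ B k)).PosSemidef := by
  have hB_block : ∀ k, B k = ρAB.submatrix (Prod.mk k) (Prod.mk k) := fun k => hB k
  have hρB_sum : ρB = ∑ k, B k := by
    ext a b
    simp [hρB, hB, Matrix.sum_apply]
  have hckl_eq : ∀ k l, ((ckl k l : ℝ) : ℂ) = star (x l k) * x l k := fun k l => by
    rw [hckl, Complex.star_def, Complex.conj_mul']
    push_cast
    rfl
  refine ⟨?_, ?_⟩
  · simp only [vecMulVec_mul_single_kronecker_one_mul_mul, hckl_eq, hB_block]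
  · have hdiff : (c : ℂ) • ((1 : Matrix (Fin d) (Fin d) ℂ) ⊗ₖ ρB) -
        ∑ k, ∑ l, ((ckl k l : ℝ) : ℂ) • (vecMulVec (x l) (star (x l)) ⊗ₖ B k) =
        ∑ k, ∑ l, ((c - ckl k l : ℝ) : ℂ) • (vecMulVec (x l) (star (x l)) ⊗ₖ B k) := by
      rw [← sum_vecMulVec_self_star_eq_one x hx, hρB_sum, sum_kronecker_sum, Finset.sum_comm]
      simp only [Finset.smul_sum, ← Finset.sum_sub_distrib, ← sub_smul, Complex.ofReal_sub]
    rw [hdiff]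
    refine posSemidef_sum _ fun k _ => posSemidef_sum _ fun l _ => ?_
    refine PosSemidef.smul ((posSemidef_vecMulVec_self_star _).kronecker ?_) ?_
    · exact hB_block k ▸ hρAB.submatrix _
    · exact Complex.zero_le_real.mpr (sub_nonneg.mpr (hc.2 ⟨(k, l), rfl⟩))

/-- Dephasing system `A` of a bipartite state sequentially in the standard
basis and then in the basis `{x l}` yields an operator bounded above, in the
Loewner order, by `c (I ⊗ ρ_B)` where `c = max_{k,l} |⟨k|x_l⟩|²`. -/
theorem dephased_twice_le (d : ℕ) (hd : 0 < d)
    (x : Fin d → (Fin d → ℂ))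
    (hx : ∀ l l', ∑ i, star (x l i) * x l' i = if l = l' then 1 else 0)
    (ckl : Fin d → Fin d → ℝ)
    (hckl : ∀ k l, ckl k l = ‖x l k‖ ^ 2)
    (c : ℝ)
    (hc : IsGreatest (Set.range fun p : Fin d × Fin d => ckl p.1 p.2) c)
    (ρAB : Matrix (Fin d × Fin d) (Fin d × Fin d) ℂ)
    (hρAB : ρAB.PosSemidef) (htr : ρAB.trace = 1)
    (ρB : Matrix (Fin d) (Fin d) ℂ)
    (hρB : ρB = Matrix.of fun j j' => ∑ i, ρAB (i, j) (i, j'))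
    (B : Fin d → Matrix (Fin d) (Fin d) ℂ)
    (hB : ∀ k, B k = Matrix.of fun j j' => ρAB (k, j) (k, j')) :
    (∑ k, ∑ l, ((Matrix.vecMulVec (x l) (star (x l)) *
          Matrix.single k k (1 : ℂ)) ⊗ₖ (1 : Matrix (Fin d) (Fin d) ℂ)) *
          ρAB *
          ((Matrix.single k k (1 : ℂ) *
            Matrix.vecMulVec (x l) (star (x l))) ⊗ₖ (1 : Matrix (Fin d) (Fin d) ℂ)) =
        ∑ k, ∑ l, ((ckl k l : ℝ) : ℂ) •
          (Matrix.vecMulVec (x l) (star (x l)) ⊗ₖ B k)) ∧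
      ((c : ℂ) • ((1 : Matrix (Fin d) (Fin d) ℂ) ⊗ₖ ρB) -
        ∑ k, ∑ l, ((ckl k l : ℝ) : ℂ) •
          (Matrix.vecMulVec (x l) (star (x l)) ⊗ₖ B k)).PosSemidef :=
  dephased_twice_le_general d x hx ckl hckl c hc ρAB hρAB ρB hρB B hB
end

section
/- Let {|k⟩} and {|x_l⟩} be two orthonormal bases of ℂ^d with overlaps c_{kl} := |⟨k|x_l⟩|², and let ρ_{AB} be a density matrix on ℂ^d ⊗ ℂ^d with marginal ρ_B. Then ∑_{k,l} c_{kl} |x_l⟩⟨x_l| ⊗ Tr_A[(|k⟩⟨k|⊗I)ρ_{AB}] ≤ ∑_l (max_k c_{kl}) |x_l⟩⟨x_l| ⊗ ρ_B in the Loewner order. -/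
/-!
Since `ρ_B = ∑_k Tr_A[(|k⟩⟨k| ⊗ I) ρ_AB]`, the difference of the two sides is
`∑_{k,l} (max_k' c_{k'l} - c_{kl}) |x_l⟩⟨x_l| ⊗ Tr_A[(|k⟩⟨k| ⊗ I) ρ_AB]`, a nonnegative
combination of tensor products of positive semidefinite matrices: each
`Tr_A[(|k⟩⟨k| ⊗ I) ρ_AB]` is a principal submatrix of `ρ_AB`.
-/

open Matrix Kronecker ComplexOrder

theorem Matrix.kronecker_sum {ι l m n p α : Type*} [NonUnitalNonAssocSemiring α]
    (A : Matrix l m α) (s : Finset ι) (B : ι → Matrix n p α) :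
    A ⊗ₖ ∑ i ∈ s, B i = ∑ i ∈ s, A ⊗ₖ B i := by
  ext ⟨i, j⟩ ⟨i', j'⟩
  simp [Matrix.sum_apply, Finset.mul_sum]

theorem posSemidef_sum_smul_kronecker_sub {ι κ n p : Type*} [Fintype ι] [Fintype κ]
    [Fintype n] [Fintype p] {P : ι → Matrix n n ℂ} {B : κ → Matrix p p ℂ}
    (hP : ∀ l, (P l).PosSemidef) (hB : ∀ k, (B k).PosSemidef)
    {c : κ → ι → ℝ} {m : ι → ℝ} (hcm : ∀ k l, c k l ≤ m l) :
    (∑ l, ((m l : ℝ) : ℂ) • (P l ⊗ₖ ∑ k, B k) -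
      ∑ k, ∑ l, ((c k l : ℝ) : ℂ) • (P l ⊗ₖ B k)).PosSemidef := by
  have hsplit : ∑ l, ((m l : ℝ) : ℂ) • (P l ⊗ₖ ∑ k, B k) -
      ∑ k, ∑ l, ((c k l : ℝ) : ℂ) • (P l ⊗ₖ B k) =
      ∑ k, ∑ l, ((m l - c k l : ℝ) : ℂ) • (P l ⊗ₖ B k) := by
    simp only [kronecker_sum, Finset.smul_sum, Complex.ofReal_sub, sub_smul,
      Finset.sum_sub_distrib]
    rw [Finset.sum_comm]
  rw [hsplit]
  refine posSemidef_sum _ fun k _ => posSemidef_sum _ fun l _ => ?_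
  exact ((hP l).kronecker (hB k)).smul (Complex.zero_le_real.mpr (sub_nonneg.mpr (hcm k l)))

theorem dephased_twice_le_columnwise_general (d : ℕ)
    (x : Fin d → (Fin d → ℂ))
    (ckl : Fin d → Fin d → ℝ)
    (m : Fin d → ℝ)
    (hm : ∀ l, IsGreatest (Set.range fun k => ckl k l) (m l))
    (ρAB : Matrix (Fin d × Fin d) (Fin d × Fin d) ℂ)
    (hρAB : ρAB.PosSemidef)
    (ρB : Matrix (Fin d) (Fin d) ℂ)
    (hρB : ρB = Matrix.of fun j j' => ∑ i, ρAB (i, j) (i, j'))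
    (B : Fin d → Matrix (Fin d) (Fin d) ℂ)
    (hB : ∀ k, B k = Matrix.of fun j j' => ρAB (k, j) (k, j')) :
    (∑ l, ((m l : ℝ) : ℂ) • (Matrix.vecMulVec (x l) (star (x l)) ⊗ₖ ρB) -
      ∑ k, ∑ l, ((ckl k l : ℝ) : ℂ) •
        (Matrix.vecMulVec (x l) (star (x l)) ⊗ₖ B k)).PosSemidef := by
  have hρB_sum : ρB = ∑ k, B k := by
    ext j j'
    simp [hρB, hB, Matrix.sum_apply]
  have hB_psd (k : Fin d) : (B k).PosSemidef := by
    rw [hB k]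
    exact hρAB.submatrix (Prod.mk k)
  rw [hρB_sum]
  exact posSemidef_sum_smul_kronecker_sub (fun l => posSemidef_vecMulVec_self_star (x l))
    hB_psd fun k l => (hm l).2 ⟨k, rfl⟩

/-- Strengthened operator bound: the twice-dephased operator
`∑_{k,l} c_{kl} |x_l⟩⟨x_l| ⊗ Tr_A[(|k⟩⟨k|⊗I)ρ_{AB}]` is bounded above, in the
Loewner order, by `∑_l (max_k c_{kl}) |x_l⟩⟨x_l| ⊗ ρ_B`. -/
theorem dephased_twice_le_columnwise (d : ℕ) (hd : 0 < d)
    (x : Fin d → (Fin d → ℂ))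
    (hx : ∀ l l', ∑ i, star (x l i) * x l' i = if l = l' then 1 else 0)
    (ckl : Fin d → Fin d → ℝ)
    (hckl : ∀ k l, ckl k l = ‖x l k‖ ^ 2)
    (m : Fin d → ℝ)
    (hm : ∀ l, IsGreatest (Set.range fun k => ckl k l) (m l))
    (ρAB : Matrix (Fin d × Fin d) (Fin d × Fin d) ℂ)
    (hρAB : ρAB.PosSemidef) (htr : ρAB.trace = 1)
    (ρB : Matrix (Fin d) (Fin d) ℂ)
    (hρB : ρB = Matrix.of fun j j' => ∑ i, ρAB (i, j) (i, j'))
    (B : Fin d → Matrix (Fin d) (Fin d) ℂ)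
    (hB : ∀ k, B k = Matrix.of fun j j' => ρAB (k, j) (k, j')) :
    (∑ l, ((m l : ℝ) : ℂ) • (Matrix.vecMulVec (x l) (star (x l)) ⊗ₖ ρB) -
      ∑ k, ∑ l, ((ckl k l : ℝ) : ℂ) •
        (Matrix.vecMulVec (x l) (star (x l)) ⊗ₖ B k)).PosSemidef :=
  dephased_twice_le_columnwise_general d x ckl m hm ρAB hρAB ρB hρB B hB
end

section
/- Let |φ₀⟩ = (1/√d)∑_k |k⟩|k⟩ and let σ_Z = ∑_k ω^k|k⟩⟨k|, σ̃_X = ∑_k ω^k |x_k⟩⟨x_k| for an orthonormal basis {|x_l⟩} of ℂ^d, with ω = e^{2πi/d}. Then the equal-probability ensemble average of the encoded states equals (1/d²)∑_{m,n=0}^{d-1} (σ̃_X^m σ_Z^n ⊗ I)|φ₀⟩⟨φ₀|(σ̃_X^m σ_Z^n ⊗ I)† = ∑_{k,l} (c_{kl}/d) |x_l⟩⟨x_l| ⊗ |k⟩⟨k|, where c_{kl} = |⟨k|x_l⟩|². In particular, its von Neumann entropy equals the Shannon entropy H({c_{kl}/d}). -/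
open Matrix Kronecker

/-- Von Neumann entropy (base 2) of a Hermitian matrix, via its eigenvalues. -/
noncomputable def vnEntropy {n : Type*} [Fintype n] [DecidableEq n]
    (ρ : Matrix n n ℂ) (hρ : ρ.IsHermitian) : ℝ :=
  ∑ i, -(hρ.eigenvalues i * Real.logb 2 (hρ.eigenvalues i))

/-- Shannon entropy (base 2) of a finitely indexed family of reals. -/
noncomputable def shannonEntropy {ι : Type*} [Fintype ι] (p : ι → ℝ) : ℝ :=
  ∑ i, -(p i * Real.logb 2 (p i))

/-!
Let `W` be the unitary whose columns are the `x l`, so that `σX = W σZ Wᴴ`, and put `U = W ⊗ I`,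
`V = σZ ⊗ I`. The encoding operators are then `σX ^ m σZ ^ n ⊗ I = U V ^ m Uᴴ V ^ n`.
Since `V` is diagonal with entries `ω ^ k` on the block of first index `k`, character
orthogonality of the `d`-th roots of unity turns the average of `V ^ n (·) (V ^ n)ᴴ` over `n`
into the pinching `P` onto these blocks. Hence `ρavg = U P(Uᴴ P(|φ₀⟩⟨φ₀|) U) Uᴴ`, and the inner
matrix is diagonal with entries `|⟨k|x_l⟩|² / d`. So `ρavg` is unitarily similar to this
diagonal matrix, which gives the decomposition, and also the eigenvalues, by comparing
characteristic polynomials.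
-/

open Finset

theorem IsPrimitiveRoot.sum_pow_mul_star_pow {ζ : ℂ} {d : ℕ} (hζ : IsPrimitiveRoot ζ d)
    (a b : Fin d) :
    ∑ m ∈ range d, (ζ ^ (a : ℕ)) ^ m * star ((ζ ^ (b : ℕ)) ^ m) =
      if a = b then (d : ℂ) else 0 := by
  have hd : d ≠ 0 := (Fin.pos a).ne'
  have hζ0 : ζ ≠ 0 := hζ.ne_zero hd
  have hstar (m : ℕ) : star ((ζ ^ (b : ℕ)) ^ m) = (ζ ^ (b : ℕ))⁻¹ ^ m := by
    rw [star_pow, Complex.inv_eq_conj (by simp [hζ.norm'_eq_one hd])]; rfl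
  simp_rw [hstar, ← mul_pow, ← div_eq_mul_inv]
  split_ifs with hab
  · simp [hab, hζ0]
  · have hne : ζ ^ (a : ℕ) / ζ ^ (b : ℕ) ≠ 1 := by
      rw [Ne, div_eq_one_iff_eq (pow_ne_zero _ hζ0)]
      exact fun h => hab (Fin.ext (hζ.pow_inj a.isLt b.isLt h))
    rw [geom_sum_eq hne, div_pow, ← pow_mul, ← pow_mul, mul_comm (a : ℕ), mul_comm (b : ℕ),
      pow_mul, pow_mul, hζ.pow_eq_one]
    simp

namespace Matrix

section Pinching

variable {n ι α : Type*} [DecidableEq ι]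

def pinching [Zero α] (a : n → ι) (B : Matrix n n α) : Matrix n n α :=
  of fun i j => if a i = a j then B i j else 0

theorem pinching_smul {R : Type*} [Zero α] [SMulZeroClass R α] (a : n → ι) (c : R)
    (B : Matrix n n α) : pinching a (c • B) = c • pinching a B := by
  ext i j
  simp only [pinching, of_apply, smul_apply]
  split_ifs <;> simp

theorem sum_diagonal_pow_mul_mul_conjTranspose_pow [Fintype n] [DecidableEq n] {ζ : ℂ} {d : ℕ}
    (hζ : IsPrimitiveRoot ζ d) (a : n → Fin d) (B : Matrix n n ℂ) :
    ∑ m ∈ range d, diagonal (fun i => ζ ^ (a i : ℕ)) ^ m * B *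
      (diagonal (fun i => ζ ^ (a i : ℕ)) ^ m)ᴴ = (d : ℂ) • pinching a B := by
  ext i j
  simp only [diagonal_pow, diagonal_conjTranspose, diagonal_mul, mul_diagonal, sum_apply,
    smul_apply, pinching, of_apply, Pi.pow_apply, Pi.star_apply, smul_eq_mul]
  calc ∑ m ∈ range d, (ζ ^ (a i : ℕ)) ^ m * B i j * star ((ζ ^ (a j : ℕ)) ^ m)
      = B i j * ∑ m ∈ range d, (ζ ^ (a i : ℕ)) ^ m * star ((ζ ^ (a j : ℕ)) ^ m) := by
        rw [mul_sum]; exact sum_congr rfl fun m _ => by ring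
    _ = _ := by rw [hζ.sum_pow_mul_star_pow]; split_ifs <;> ring

end Pinching

section Kronecker

variable {α m n : Type*} [CommSemiring α] [Fintype n] [Fintype m] [DecidableEq m]

theorem mul_kronecker_one (A B : Matrix n n α) :
    (A * B) ⊗ₖ (1 : Matrix m m α) = (A ⊗ₖ 1) * (B ⊗ₖ 1) := by
  rw [← mul_kronecker_mul, Matrix.mul_one]

theorem pow_kronecker_one [DecidableEq n] (A : Matrix n n α) (k : ℕ) :
    (A ^ k) ⊗ₖ (1 : Matrix m m α) = (A ⊗ₖ 1) ^ k := by
  induction k with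
  | zero => simp
  | succ k ih => rw [pow_succ, mul_kronecker_one, ih, pow_succ]

theorem conj_pow_mul_pow_kronecker_one {R : Type*} [CommRing R] [StarRing R] [DecidableEq n]
    {W : Matrix n n R} (hW : W ∈ unitaryGroup n R) (A : Matrix n n R) (i j : ℕ) :
    ((W * A * Wᴴ) ^ i * A ^ j) ⊗ₖ (1 : Matrix m m R) =
      (W ⊗ₖ 1) * (A ⊗ₖ 1) ^ i * (W ⊗ₖ 1)ᴴ * (A ⊗ₖ 1) ^ j := by
  have hpow : (W * A * Wᴴ) ^ i = W * A ^ i * Wᴴ := by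
    simpa [star_eq_conjTranspose] using (map_pow (Unitary.conjStarAlgAut R _ ⟨W, hW⟩) A i).symm
  rw [hpow, mul_kronecker_one, mul_kronecker_one, mul_kronecker_one, pow_kronecker_one,
    pow_kronecker_one, conjTranspose_kronecker, conjTranspose_one]

end Kronecker

section OrthonormalColumns

variable {m n : Type*} [Fintype m] [DecidableEq m]

theorem transpose_of_mem_unitaryGroup [Fintype n] [DecidableEq n] {x : n → n → ℂ}
    (hx : ∀ l l', ∑ i, star (x l i) * x l' i = if l = l' then 1 else 0) :
    (of x)ᵀ ∈ unitaryGroup n ℂ := by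
  rw [mem_unitaryGroup_iff']
  ext l l'
  simpa [mul_apply, one_apply] using hx l l'

theorem transpose_mul_diagonal_mul_conjTranspose (x : m → n → ℂ) (v : m → ℂ) :
    (of x)ᵀ * diagonal v * ((of x)ᵀ)ᴴ = ∑ k, v k • vecMulVec (x k) (star (x k)) := by
  ext i j
  simp [mul_apply, diagonal_apply, sum_apply, vecMulVec_apply, mul_assoc, mul_left_comm]

theorem transpose_kronecker_one_mul_diagonal_mul_conjTranspose {p : Type*} [Fintype p]
    [DecidableEq p] (x : m → n → ℂ) (c : m × p → ℂ) :
    ((of x)ᵀ ⊗ₖ (1 : Matrix p p ℂ)) * diagonal c * ((of x)ᵀ ⊗ₖ (1 : Matrix p p ℂ))ᴴ =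
      ∑ k, ∑ l, c (l, k) • (vecMulVec (x l) (star (x l)) ⊗ₖ single k k 1) := by
  ext ⟨i, j⟩ ⟨i', j'⟩
  by_cases hj : j = j'
  · subst hj
    simp [mul_apply, diagonal_apply, sum_apply, vecMulVec_apply, Fintype.sum_prod_type, one_apply,
      single_apply, mul_assoc, mul_left_comm]
  · simp [mul_apply, diagonal_apply, sum_apply, vecMulVec_apply, Fintype.sum_prod_type, one_apply,
      single_apply, ite_and, hj, Ne.symm hj]

end OrthonormalColumns

theorem sum_sum_mul_mul_conjTranspose_eq_nested {n R : Type*} [Fintype n] [CommSemiring R]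
    [StarRing R] (U Φ : Matrix n n R) (A B : ℕ → Matrix n n R) (s t : Finset ℕ) :
    ∑ i ∈ s, ∑ j ∈ t, (U * A i * Uᴴ * B j) * Φ * (U * A i * Uᴴ * B j)ᴴ =
      U * (∑ i ∈ s, A i * (Uᴴ * (∑ j ∈ t, B j * Φ * (B j)ᴴ) * U) * (A i)ᴴ) * Uᴴ := by
  simp only [conjTranspose_mul, conjTranspose_conjTranspose, Matrix.mul_sum, Matrix.sum_mul,
    Matrix.mul_assoc]

theorem IsHermitian.sum_comp_eigenvalues_eq_of_conj_diagonal {n : Type*} [Fintype n]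
    [DecidableEq n] {A U : Matrix n n ℂ} (hA : A.IsHermitian) (hU : U ∈ unitaryGroup n ℂ)
    (v : n → ℝ) (h : A = U * diagonal (fun i => (v i : ℂ)) * Uᴴ) (f : ℝ → ℝ) :
    ∑ i, f (hA.eigenvalues i) = ∑ i, f (v i) := by
  have hcharpoly : A.charpoly = (diagonal (fun i => (v i : ℂ))).charpoly := by
    rw [h, charpoly_mul_comm, ← Matrix.mul_assoc, ← star_eq_conjTranspose,
      mem_unitaryGroup_iff'.mp hU, Matrix.one_mul]
  have hroots : Multiset.map (RCLike.ofReal ∘ hA.eigenvalues) univ.val =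
      Multiset.map (fun i => (v i : ℂ)) univ.val := by
    rw [← hA.roots_charpoly_eq_eigenvalues, hcharpoly, charpoly_diagonal, Polynomial.roots_prod]
    · simp
    · simp [Finset.prod_ne_zero_iff, Polynomial.X_sub_C_ne_zero]
  have hmap : Multiset.map hA.eigenvalues univ.val = Multiset.map v univ.val := by
    simpa [Multiset.map_map, Function.comp_def] using congr_arg (Multiset.map RCLike.re) hroots
  simpa only [Multiset.map_map, Function.comp_def, ← sum_eq_multiset_sum] using
    congr_arg (fun s => (Multiset.map f s).sum) hmap

end Matrix

noncomputable def maxEntangled (d : ℕ) : Fin d × Fin d → ℂ :=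
  fun p => if p.1 = p.2 then ((1 / Real.sqrt d : ℝ) : ℂ) else 0

theorem pinching_conj_pinching_maxEntangled {d : ℕ} (x : Fin d → Fin d → ℂ) :
    pinching Prod.fst (((of x)ᵀ ⊗ₖ (1 : Matrix (Fin d) (Fin d) ℂ))ᴴ *
      pinching Prod.fst (vecMulVec (maxEntangled d) (star (maxEntangled d))) *
      ((of x)ᵀ ⊗ₖ (1 : Matrix (Fin d) (Fin d) ℂ))) =
    diagonal (fun p => ((‖x p.1 p.2‖ ^ 2 / d : ℝ) : ℂ)) := by
  ext ⟨l, k⟩ ⟨l', k'⟩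
  by_cases hl : l = l'
  · subst hl
    by_cases hk : k = k'
    · subst hk
      have hsqrt : ((Real.sqrt d : ℂ))⁻¹ * (Real.sqrt d : ℂ)⁻¹ = (d : ℂ)⁻¹ := by
        rw [← mul_inv, ← Complex.ofReal_mul, Real.mul_self_sqrt (Nat.cast_nonneg _)]; simp
      simp [pinching, maxEntangled, mul_apply, vecMulVec_apply, ite_mul, mul_ite,
        apply_ite (starRingEnd ℂ), one_apply, Fintype.sum_prod_type, hsqrt,
        mul_right_comm _ _ (x l k), Complex.conj_mul', div_eq_mul_inv]
    · simp [pinching, maxEntangled, mul_apply, vecMulVec_apply, ite_mul, mul_ite,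
        apply_ite (starRingEnd ℂ), one_apply, Fintype.sum_prod_type, hk, Ne.symm hk]
  · simp [pinching, hl]

/-- The equal-probability ensemble average of the Pauli-product-encoded
maximally entangled state equals `∑_{k,l} (c_{kl}/d) |x_l⟩⟨x_l| ⊗ |k⟩⟨k|`; in
particular its von Neumann entropy is the Shannon entropy `H({c_{kl}/d})`. -/
theorem ensemble_average_encoded_MES (d : ℕ) (hd : 0 < d)
    (ω : ℂ) (hω : ω = Complex.exp (2 * Real.pi * Complex.I / d))
    (x : Fin d → (Fin d → ℂ))
    (hx : ∀ l l', ∑ i, star (x l i) * x l' i = if l = l' then 1 else 0)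
    (ckl : Fin d → Fin d → ℝ) (hckl : ∀ k l, ckl k l = ‖x l k‖ ^ 2)
    (σZ σX : Matrix (Fin d) (Fin d) ℂ)
    (hZ : σZ = Matrix.diagonal (fun k : Fin d => ω ^ (k : ℕ)))
    (hX : σX = ∑ k : Fin d, ω ^ (k : ℕ) • Matrix.vecMulVec (x k) (star (x k)))
    (φ₀ : Fin d × Fin d → ℂ)
    (hφ₀ : φ₀ = fun p : Fin d × Fin d =>
      if p.1 = p.2 then ((1 / Real.sqrt d : ℝ) : ℂ) else 0)
    (ρavg : Matrix (Fin d × Fin d) (Fin d × Fin d) ℂ)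
    (hρavg : ρavg = (1 / (d ^ 2) : ℂ) •
      ∑ m ∈ Finset.range d, ∑ n ∈ Finset.range d,
        ((σX ^ m * σZ ^ n) ⊗ₖ (1 : Matrix (Fin d) (Fin d) ℂ)) *
          Matrix.vecMulVec φ₀ (star φ₀) *
          ((σX ^ m * σZ ^ n) ⊗ₖ (1 : Matrix (Fin d) (Fin d) ℂ))ᴴ)
    (hherm : ρavg.IsHermitian) :
    ρavg = ∑ k, ∑ l, ((ckl k l / d : ℝ) : ℂ) •
        (Matrix.vecMulVec (x l) (star (x l)) ⊗ₖ Matrix.single k k (1 : ℂ)) ∧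
      vnEntropy ρavg hherm =
        shannonEntropy (fun p : Fin d × Fin d => ckl p.1 p.2 / d) := by
  have hζ : IsPrimitiveRoot ω d := hω ▸ Complex.isPrimitiveRoot_exp d hd.ne'
  have hW : (of x)ᵀ ∈ unitaryGroup (Fin d) ℂ := transpose_of_mem_unitaryGroup hx
  have hσX : σX = (of x)ᵀ * σZ * ((of x)ᵀ)ᴴ := by
    rw [hX, hZ, transpose_mul_diagonal_mul_conjTranspose]
  have hσZ : σZ ⊗ₖ (1 : Matrix (Fin d) (Fin d) ℂ) = diagonal (fun p => ω ^ (p.1 : ℕ)) := by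
    rw [hZ, ← diagonal_one, diagonal_kronecker_diagonal]; simp
  have hρ : ρavg = ((of x)ᵀ ⊗ₖ 1) * diagonal (fun p => ((‖x p.1 p.2‖ ^ 2 / d : ℝ) : ℂ)) *
      ((of x)ᵀ ⊗ₖ 1)ᴴ := by
    have hd' : (d : ℂ) ≠ 0 := Nat.cast_ne_zero.mpr hd.ne'
    rw [hρavg, show φ₀ = maxEntangled d from hφ₀, hσX]
    simp_rw [conj_pow_mul_pow_kronecker_one hW, hσZ]
    rw [sum_sum_mul_mul_conjTranspose_eq_nested, sum_diagonal_pow_mul_mul_conjTranspose_pow hζ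
      Prod.fst (vecMulVec (maxEntangled d) (star (maxEntangled d))), Matrix.mul_smul,
      Matrix.smul_mul, sum_diagonal_pow_mul_mul_conjTranspose_pow hζ Prod.fst, pinching_smul,
      smul_smul, pinching_conj_pinching_maxEntangled, Matrix.mul_smul, Matrix.smul_mul, smul_smul,
      show 1 / (d : ℂ) ^ 2 * (d * d) = 1 by field_simp, one_smul]
  refine ⟨?_, ?_⟩
  · rw [hρ, transpose_kronecker_one_mul_diagonal_mul_conjTranspose]
    simp [hckl]
  · rw [vnEntropy, hherm.sum_comp_eigenvalues_eq_of_conj_diagonal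
      (kronecker_mem_unitary hW (one_mem _)) (fun p => ‖x p.1 p.2‖ ^ 2 / d) hρ
      (fun t => -(t * Real.logb 2 t)), shannonEntropy]
    exact Fintype.sum_equiv (Equiv.prodComm _ _) _ _ fun p => by simp [hckl]
end
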